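/- arXiv:cs/0605041 — 7 statements merged into one kernel-verified Lean document; each statement's English description precedes it below -/
import Mathlib

section
/- Let M ≥ 1, P > 0, N > 0, L ≥ 1 be given, and define p_k = (N/M)·(1 + MP/N)^((L−k)/L)·((1 + MP/N)^(1/L) − 1) for k = 1, …, L. Then (a) ∑_{k=1}^L p_k = P, and (b) for every k, SIR_k := p_k/(M·P − M·∑_{j<k} p_j − p_k + N) = (A^(1/L) − 1)/((M−1)·A^(1/L) + 1), where A = 1 + MP/N; in particular SIR_k is independent of k. -/
/-!
With `A = 1 + MP/N` and `c = N/M`, the split is `p_k = c A^((L-k+1)/L) - c A^((L-k)/L)`, so the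
powers telescope: `∑_{k ≤ L} p_k = c (A - 1) = P`, and the power of the classes decoded after `k`
is `c A^((L-k)/L) - c`. The interference seen by class `k` is therefore
`N A^((L-k+1)/L) - p_k = c A^((L-k)/L) ((M-1) A^(1/L) + 1)`, while `p_k = c A^((L-k)/L) (A^(1/L) - 1)`;
the common factor `c A^((L-k)/L)` cancels from the SIR.
-/

open Finset

lemma Finset.sum_Ico_one_eq_sub_of_eq_sub {G : Type*} [AddCommGroup G] {p f : ℕ → G}
    (h : ∀ i, p (i + 1) = f i - f (i + 1)) (k : ℕ) :
    ∑ j ∈ Ico 1 (k + 1), p j = f 0 - f k := by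
  rw [sum_Ico_eq_sum_range, add_tsub_cancel_right]
  simp_rw [add_comm 1, h]
  exact sum_range_sub' f k

lemma Real.rpow_sub_nat_div_eq_mul {a : ℝ} (ha : 0 < a) (x y : ℝ) (i : ℕ) :
    a ^ ((x - i) / y) = a ^ ((x - (i + 1 : ℕ)) / y) * a ^ (1 / y) := by
  rw [← Real.rpow_add ha]
  congr 1
  push_cast
  ring

lemma Real.mul_rpow_mul_sub_one_eq_sub {a : ℝ} (ha : 0 < a) (c x y : ℝ) (i : ℕ) :
    c * a ^ ((x - (i + 1 : ℕ)) / y) * (a ^ (1 / y) - 1) =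
      c * a ^ ((x - i) / y) - c * a ^ ((x - (i + 1 : ℕ)) / y) := by
  rw [Real.rpow_sub_nat_div_eq_mul ha x y i]
  ring

lemma sir_eq_of_geometric_level {M P N c A t B : ℝ} (hMc : M * c = N) (hcA : c * A = c + P)
    (hct : c * t ≠ 0) :
    c * t * (B - 1) / (M * P - M * (c * A - c * (t * B)) - c * t * (B - 1) + N) =
      (B - 1) / ((M - 1) * B + 1) := by
  have hinterference : M * P - M * (c * A - c * (t * B)) - c * t * (B - 1) + N =
      c * t * ((M - 1) * B + 1) := by
    linear_combination -hMc - M * hcA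
  rw [hinterference, mul_div_mul_left _ _ hct]

theorem stmt3 (M L : ℕ) (P N : ℝ) (hM : 1 ≤ M) (hL : 1 ≤ L)
    (hP : 0 < P) (hN : 0 < N) :
    let A : ℝ := 1 + M * P / N
    let p : ℕ → ℝ := fun k =>
      (N / M) * A ^ (((L : ℝ) - k) / L) * (A ^ ((1 : ℝ) / L) - 1)
    (∑ k ∈ Finset.Icc 1 L, p k = P) ∧
    ∀ k ∈ Finset.Icc 1 L,
      p k / ((M : ℝ) * P - M * (∑ j ∈ Finset.Ico 1 k, p j) - p k + N) =
        (A ^ ((1 : ℝ) / L) - 1) / (((M : ℝ) - 1) * A ^ ((1 : ℝ) / L) + 1) := by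
  intro A p
  have hA : 0 < A := by positivity
  have hM0 : (M : ℝ) ≠ 0 := by positivity
  have hL0 : (L : ℝ) ≠ 0 := by positivity
  have hcA : N / M * A = N / M + P := by simp only [A]; field_simp
  have hpartial := sum_Ico_one_eq_sub_of_eq_sub (p := p)
    (f := fun i => N / M * A ^ (((L : ℝ) - i) / L)) (Real.mul_rpow_mul_sub_one_eq_sub hA _ L L)
  simp only [CharP.cast_eq_zero, sub_zero, div_self hL0, Real.rpow_one] at hpartial
  refine ⟨?_, fun k hk => ?_⟩
  · rw [← Ico_add_one_right_eq_Icc, hpartial, sub_self, zero_div, Real.rpow_zero, hcA]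
    ring
  · obtain ⟨m, rfl⟩ := Nat.exists_eq_add_one_of_ne_zero (by grind : k ≠ 0)
    rw [hpartial, Real.rpow_sub_nat_div_eq_mul hA]
    exact sir_eq_of_geometric_level (mul_div_cancel₀ N hM0) hcA (by positivity)
end

section
/- Fix M ≥ 1, P > 0, N > 0. For each L, let (p_1^{(L)}, …, p_L^{(L)}) be nonnegative reals with ∑_{k=1}^L p_k^{(L)} = P, and suppose max_{1≤k≤L} p_k^{(L)} → 0 as L → ∞. Define r_k^{(L)} = (1/2)·log(1 + p_k^{(L)}/(M·P − M·∑_{j<k} p_j^{(L)} − p_k^{(L)} + N)). Then lim_{L→∞} ∑_{k=1}^L r_k^{(L)} = (1/(2M))·log(1 + M·P/N). -/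
/-! Put `g k = M (P - ∑_{j<k} p_j) + N`, so that `g k = g (k+1) + M p_k`, `g 1 = MP + N` and
`g (L+1) = N`. The `k`-th rate is `½ log (g k / (g k - p_k))`, while the terms
`(1/(2M)) log (g k / g (k+1))` telescope to `(1/(2M)) log (1 + MP/N)`. By
`(b-a)/b ≤ log (b/a) ≤ (b-a)/a` both lie in `[p_k / (2 g k), p_k / (2 g (k+1))]`, an interval of
length at most `M p_k² / (2N²)`, so the total error is at most `M P max_k p_k / (2N²)`. -/

open Finset Real

lemma Real.sub_div_le_log_div {a b : ℝ} (ha : 0 < a) (hb : 0 < b) : (b - a) / b ≤ log (b / a) := by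
  have h := one_sub_inv_le_log_of_pos (div_pos hb ha)
  rwa [inv_div, one_sub_div hb.ne'] at h

lemma Real.log_div_le_sub_div {a b : ℝ} (ha : 0 < a) (hb : 0 < b) : log (b / a) ≤ (b - a) / a := by
  have h := log_le_sub_one_of_pos (div_pos hb ha)
  rwa [div_sub_one ha.ne'] at h

lemma abs_half_log_sub_log_div_le {m q g : ℝ} (hm : 1 ≤ m) (hq : 0 ≤ q) (hg : 0 < g) :
    |1 / 2 * log ((g + m * q) / (g + m * q - q)) - 1 / (2 * m) * log ((g + m * q) / g)|
      ≤ m * q ^ 2 / (2 * g ^ 2) := by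
  have hqmq : q ≤ m * q := le_mul_of_one_le_left hq hm
  have hm0 : 0 < m := by linarith
  have ha : 0 < g + m * q := by positivity
  generalize hga : g + m * q = a at ha ⊢
  have haq : g ≤ a - q := by linarith
  have hlo₁ := sub_div_le_log_div (by linarith : 0 < a - q) ha
  have hhi₁ := log_div_le_sub_div (by linarith : 0 < a - q) ha
  have hlo₂ := sub_div_le_log_div hg ha
  have hhi₂ := log_div_le_sub_div hg ha
  have hsub₁ : a - (a - q) = q := by ring
  have hsub₂ : a - g = m * q := by linarith
  rw [hsub₁] at hlo₁ hhi₁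
  rw [hsub₂] at hlo₂ hhi₂
  have hle : q / (a - q) ≤ q / g := div_le_div_of_nonneg_left hq hg haq
  calc _ ≤ q / (2 * g) - q / (2 * a) := by
        apply abs_sub_le_of_le_of_le
        · calc q / (2 * a) = 1 / 2 * (q / a) := by ring
            _ ≤ _ := by gcongr
        · calc _ ≤ 1 / 2 * (q / g) := by gcongr; linarith
            _ = q / (2 * g) := by ring
        · calc q / (2 * a) = 1 / (2 * m) * (m * q / a) := by field_simp
            _ ≤ _ := by gcongr
        · calc _ ≤ 1 / (2 * m) * (m * q / g) := by gcongr
            _ = q / (2 * g) := by field_simp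
    _ = m * q ^ 2 / (2 * g * a) := by subst hga; field_simp; ring
    _ ≤ m * q ^ 2 / (2 * g ^ 2) :=
        div_le_div_of_nonneg_left (by positivity) (by positivity) (by nlinarith)

/-- The `g k` of the header: received power of the virtual users still undecoded when the `k`-th
one is decoded (itself included, for all `m` users), plus noise. -/
def interferenceLevel (m P N : ℝ) (q : ℕ → ℝ) (k : ℕ) : ℝ :=
  m * (P - ∑ j ∈ Ico 1 k, q j) + N

section interferenceLevel

variable {m P N : ℝ} {q : ℕ → ℝ} {L : ℕ}

lemma interferenceLevel_eq_succ_add {k : ℕ} (hk : 1 ≤ k) :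
    interferenceLevel m P N q k = interferenceLevel m P N q (k + 1) + m * q k := by
  simp only [interferenceLevel, sum_Ico_succ_top hk]
  ring

lemma le_interferenceLevel_succ (hm : 0 ≤ m) (hq : ∀ k ∈ Icc 1 L, 0 ≤ q k)
    (hP : ∑ k ∈ Icc 1 L, q k = P) {k : ℕ} (hkL : k ≤ L) :
    N ≤ interferenceLevel m P N q (k + 1) := by
  have : ∑ j ∈ Ico 1 (k + 1), q j ≤ P := by
    rw [Ico_add_one_right_eq_Icc, ← hP]
    exact sum_le_sum_of_subset_of_nonneg (Icc_subset_Icc_right hkL) fun j hj _ => hq j hj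
  unfold interferenceLevel
  nlinarith

lemma sum_log_interferenceLevel_div (hm : 0 ≤ m) (hN : 0 < N) (hq : ∀ k ∈ Icc 1 L, 0 ≤ q k)
    (hP : ∑ k ∈ Icc 1 L, q k = P) :
    ∑ k ∈ Icc 1 L, log (interferenceLevel m P N q k / interferenceLevel m P N q (k + 1))
      = log (1 + m * P / N) := by
  set g := interferenceLevel m P N q
  have hpos : ∀ k ∈ Icc 1 L, 0 < g k ∧ 0 < g (k + 1) := fun k hk => by
    have hN_le : N ≤ g (k + 1) := le_interferenceLevel_succ hm hq hP (mem_Icc.1 hk).2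
    have hgk : g k = g (k + 1) + m * q k := interferenceLevel_eq_succ_add (mem_Icc.1 hk).1
    constructor <;> nlinarith [hq k hk]
  have hP0 : 0 ≤ P := hP ▸ sum_nonneg hq
  have hg1 : g 1 = N + m * P := by simp [g, interferenceLevel, add_comm]
  have hgL : g (L + 1) = N := by simp [g, interferenceLevel, Ico_add_one_right_eq_Icc, hP]
  have htel : ∑ k ∈ Icc 1 L, (log (g k) - log (g (k + 1))) = log (g 1) - log (g (L + 1)) := by
    have h := sum_Ico_sub (fun k => log (g k)) (Nat.le_add_left 1 L)
    rw [Ico_add_one_right_eq_Icc] at h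
    rw [← neg_sub, ← h, ← sum_neg_distrib]
    simp only [neg_sub]
  rw [one_add_div hN.ne', log_div (by nlinarith) hN.ne', ← hg1, ← hgL, ← htel]
  exact sum_congr rfl fun k hk => log_div (hpos k hk).1.ne' (hpos k hk).2.ne'

end interferenceLevel

lemma abs_sum_split_rates_sub_le {m N δ P : ℝ} (hm : 1 ≤ m) (hN : 0 < N) {q : ℕ → ℝ} {L : ℕ}
    (hq : ∀ k ∈ Icc 1 L, 0 ≤ q k) (hqδ : ∀ k ∈ Icc 1 L, q k ≤ δ)
    (hP : ∑ k ∈ Icc 1 L, q k = P) :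
    |∑ k ∈ Icc 1 L, 1 / 2 * log (1 + q k / (m * P - m * ∑ j ∈ Ico 1 k, q j - q k + N))
      - 1 / (2 * m) * log (1 + m * P / N)| ≤ m * P * δ / (2 * N ^ 2) := by
  have hm0 : 0 ≤ m := by linarith
  rw [← sum_log_interferenceLevel_div hm0 hN hq hP, mul_sum, ← sum_sub_distrib]
  set g := interferenceLevel m P N q
  calc _ ≤ ∑ k ∈ Icc 1 L, m * δ / (2 * N ^ 2) * q k := by
        refine (abs_sum_le_sum_abs _ _).trans (sum_le_sum fun k hk => ?_)
        have hgN : N ≤ g (k + 1) := le_interferenceLevel_succ hm0 hq hP (mem_Icc.1 hk).2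
        have hgk : g k = g (k + 1) + m * q k := interferenceLevel_eq_succ_add (mem_Icc.1 hk).1
        have hrate : 1 + q k / (m * P - m * ∑ j ∈ Ico 1 k, q j - q k + N)
            = (g (k + 1) + m * q k) / (g (k + 1) + m * q k - q k) := by
          have hden : m * P - m * ∑ j ∈ Ico 1 k, q j - q k + N = g (k + 1) + m * q k - q k := by
            rw [← hgk]
            simp only [g, interferenceLevel]
            ring
          have : 0 < g (k + 1) + m * q k - q k := by nlinarith [hq k hk]
          rw [hden, one_add_div this.ne', sub_add_cancel]
        rw [hrate, hgk]
        calc _ ≤ m * q k ^ 2 / (2 * g (k + 1) ^ 2) :=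
              abs_half_log_sub_log_div_le hm (hq k hk) (by linarith)
          _ ≤ m * q k ^ 2 / (2 * N ^ 2) := by gcongr
          _ = m * q k / (2 * N ^ 2) * q k := by ring
          _ ≤ m * δ / (2 * N ^ 2) * q k := by
              have := hqδ k hk
              have := hq k hk
              gcongr
    _ = m * P * δ / (2 * N ^ 2) := by rw [← mul_sum, hP]; ring

theorem stmt4 (M : ℕ) (P N : ℝ) (hM : 1 ≤ M) (hP : 0 < P) (hN : 0 < N)
    (p : ℕ → ℕ → ℝ)
    (hnonneg : ∀ L, ∀ k ∈ Finset.Icc 1 L, 0 ≤ p L k)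
    (hsum : ∀ L, 1 ≤ L → ∑ k ∈ Finset.Icc 1 L, p L k = P)
    (hmax : ∀ ε : ℝ, 0 < ε → ∃ L₀ : ℕ, ∀ L ≥ L₀, ∀ k ∈ Finset.Icc 1 L, p L k < ε) :
    Filter.Tendsto
      (fun L : ℕ => ∑ k ∈ Finset.Icc 1 L,
        (1 / 2) * Real.log (1 + p L k /
          ((M : ℝ) * P - M * (∑ j ∈ Finset.Ico 1 k, p L j) - p L k + N)))
      Filter.atTop
      (nhds ((1 / (2 * (M : ℝ))) * Real.log (1 + M * P / N))) := by
  have hM1 : (1 : ℝ) ≤ M := by exact_mod_cast hM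
  have hMP : 0 < (M : ℝ) * P := by positivity
  refine Metric.tendsto_atTop.2 fun ε hε => ?_
  obtain ⟨L₀, hL₀⟩ := hmax (N ^ 2 * ε / (M * P)) (by positivity)
  refine ⟨max L₀ 1, fun L hL => ?_⟩
  rw [Real.dist_eq]
  calc _ ≤ M * P * (N ^ 2 * ε / (M * P)) / (2 * N ^ 2) :=
        abs_sum_split_rates_sub_le hM1 hN (hnonneg L)
          (fun k hk => (hL₀ L (le_of_max_le_left hL) k hk).le) (hsum L (le_of_max_le_right hL))
    _ = ε / 2 := by field_simp
    _ < ε := half_lt_self hε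
end

section
/- Fix M ≥ 1, P > 0, N > 0 and set A = 1 + M·P/N. Define e[L] = (1/(2M))·log(A) − (L/2)·log(M/(M − 1 + A^(−1/L))). Then lim_{L→∞} L·e[L] = (M−1)·(log A)²/(4·M²). Consequently, there exist constants c₁, c₂ > 0 and n₀ such that c₁/L ≤ e[L] ≤ c₂/L for all L ≥ n₀ (i.e., e[L] = Θ(1/L)), provided M ≥ 2. -/
/-!
Writing `a = log A` and `t = a / L`, one has `A ^ (-1/L) = exp (-t)` and
`L · e[L] = (a² / 2) · F t / t²` with `F t = t / M - log M + log (M - 1 + exp (-t))`.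
Now `F 0 = F' 0 = 0` and `F'' 0 = (M - 1) / M²`, so by l'Hôpital's rule
`F t / t² → (M - 1) / (2 M²)` as `t → 0⁺`. The limit of `L · e[L]` is positive when `M ≥ 2`, which gives `e[L] = Θ(1/L)`.
-/

open Filter Real Topology Set

theorem tendsto_div_sq_nhdsGT_zero_of_hasDerivAt {f f' : ℝ → ℝ} {c : ℝ}
    (hf : ∀ᶠ t in 𝓝 0, HasDerivAt f (f' t) t) (hf0 : f 0 = 0) (hf'0 : f' 0 = 0)
    (hf' : HasDerivAt f' c 0) :
    Tendsto (fun t => f t / t ^ 2) (𝓝[>] 0) (𝓝 (c / 2)) := by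
  have hslope : Tendsto (fun t => f' t / t) (𝓝[>] 0) (𝓝 c) := by
    have := hasDerivAt_iff_tendsto_slope.mp hf'
    simp only [slope_fun_def_field, hf'0, sub_zero] at this
    exact this.mono_left (nhdsWithin_mono _ fun t (ht : t ∈ Ioi 0) => ne_of_gt ht)
  have hf_cont : Tendsto f (𝓝[>] 0) (𝓝 0) := by
    simpa [hf0] using hf.self_of_nhds.continuousAt.tendsto.mono_left nhdsWithin_le_nhds
  refine HasDerivAt.lhopital_zero_nhdsGT (f' := f') (g' := fun t => 2 * t)
    (hf.filter_mono nhdsWithin_le_nhds)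
    (Eventually.of_forall fun t => by simpa using hasDerivAt_pow 2 t)
    (eventually_mem_nhdsWithin.mono fun t (ht : 0 < t) => by positivity) hf_cont
    (by simpa using ((continuous_pow 2).tendsto (0 : ℝ)).mono_left nhdsWithin_le_nhds)
    ((hslope.div_const 2).congr fun t => by rw [div_div, mul_comm])

theorem tendsto_const_div_natCast_nhdsGT_zero {a : ℝ} (ha : 0 < a) :
    Tendsto (fun n : ℕ => a / n) atTop (𝓝[>] 0) :=
  tendsto_nhdsWithin_iff.mpr ⟨tendsto_const_div_atTop_nhds_zero_nat a,
    (eventually_gt_atTop 0).mono fun _ hn => div_pos ha (Nat.cast_pos.mpr hn)⟩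

theorem exists_div_le_and_le_div_of_tendsto_natCast_mul {u : ℕ → ℝ} {ℓ : ℝ} (hℓ : 0 < ℓ)
    (hu : Tendsto (fun n : ℕ => (n : ℝ) * u n) atTop (𝓝 ℓ)) :
    ∃ c₁ c₂ : ℝ, ∃ n₀ : ℕ, 0 < c₁ ∧ 0 < c₂ ∧ ∀ n : ℕ, n₀ ≤ n → c₁ / n ≤ u n ∧ u n ≤ c₂ / n := by
  have hnear : ∀ᶠ n : ℕ in atTop, (n : ℝ) * u n ∈ Ioo (ℓ / 2) (2 * ℓ) :=
    hu (Ioo_mem_nhds (by linarith) (by linarith))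
  obtain ⟨n₀, hn₀⟩ := (hnear.and (eventually_gt_atTop 0)).exists_forall_of_atTop
  refine ⟨ℓ / 2, 2 * ℓ, n₀, by linarith, by linarith, fun n hn => ?_⟩
  obtain ⟨⟨hlo, hhi⟩, hn_pos⟩ := hn₀ n hn
  have hn_pos : (0 : ℝ) < n := Nat.cast_pos.mpr hn_pos
  exact ⟨(div_le_iff₀ hn_pos).mpr (by linarith), (le_div_iff₀ hn_pos).mpr (by linarith)⟩

namespace RateSplitting

/-- `e[L] = (L / 2) · loss M (log A / L)`. -/
noncomputable def loss (m t : ℝ) : ℝ := t / m - log m + log (m - 1 + exp (-t))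

noncomputable def lossDeriv (m t : ℝ) : ℝ := 1 / m - exp (-t) / (m - 1 + exp (-t))

variable {m : ℝ}

theorem sub_one_add_exp_neg_pos (hm : 1 ≤ m) (t : ℝ) : 0 < m - 1 + exp (-t) := by
  linarith [exp_pos (-t)]

theorem hasDerivAt_exp_neg (t : ℝ) : HasDerivAt (fun s => exp (-s)) (-exp (-t)) t := by
  simpa using (hasDerivAt_neg t).exp

theorem loss_zero : loss m 0 = 0 := by
  simp [loss]

theorem lossDeriv_zero : lossDeriv m 0 = 0 := by
  simp [lossDeriv]

theorem hasDerivAt_loss (hm : 1 ≤ m) (t : ℝ) : HasDerivAt (loss m) (lossDeriv m t) t := by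
  have hlog := ((hasDerivAt_exp_neg t).const_add (m - 1)).log
    (sub_one_add_exp_neg_pos hm t).ne'
  refine ((((hasDerivAt_id t).div_const m).sub_const (log m)).add hlog).congr_deriv ?_
  simp [lossDeriv, sub_eq_add_neg, neg_div]

theorem hasDerivAt_lossDeriv_zero (hm : m ≠ 0) :
    HasDerivAt (lossDeriv m) ((m - 1) / m ^ 2) 0 := by
  have hden : m - 1 + exp (-(0 : ℝ)) = m := by simp
  have hquot := (hasDerivAt_exp_neg 0).div ((hasDerivAt_exp_neg 0).const_add (m - 1))
    (by rwa [hden])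
  refine ((hasDerivAt_const (0 : ℝ) (1 / m)).sub hquot).congr_deriv ?_
  rw [hden, neg_zero, exp_zero]
  field_simp
  ring

theorem tendsto_loss_div_sq (hm : 1 ≤ m) :
    Tendsto (fun t => loss m t / t ^ 2) (𝓝[>] 0) (𝓝 ((m - 1) / (2 * m ^ 2))) := by
  convert tendsto_div_sq_nhdsGT_zero_of_hasDerivAt
    (Eventually.of_forall (hasDerivAt_loss hm)) loss_zero lossDeriv_zero
    (hasDerivAt_lossDeriv_zero (by linarith)) using 2
  ring

theorem natCast_mul_gap_eq (hm : 1 ≤ m) {A : ℝ} (hA : 1 < A) {L : ℕ} (hL : L ≠ 0) :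
    (L : ℝ) * ((1 / (2 * m)) * log A - ((L : ℝ) / 2) * log (m / (m - 1 + A ^ (-(1 : ℝ) / L))))
      = (log A ^ 2 / 2) * (loss m (log A / L) / (log A / L) ^ 2) := by
  have hL0 : (L : ℝ) ≠ 0 := Nat.cast_ne_zero.mpr hL
  have ha : log A ≠ 0 := (log_pos hA).ne'
  have hpow : A ^ (-(1 : ℝ) / L) = exp (-(log A / L)) := by
    rw [rpow_def_of_pos (by linarith)]
    ring_nf
  rw [hpow, log_div (by linarith) (sub_one_add_exp_neg_pos hm _).ne', loss]
  field_simp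
  ring

end RateSplitting

open RateSplitting in
theorem stmt5 (M : ℕ) (P N : ℝ) (hM : 1 ≤ M) (hP : 0 < P) (hN : 0 < N) :
    let A : ℝ := 1 + M * P / N
    let e : ℕ → ℝ := fun L =>
      (1 / (2 * (M : ℝ))) * Real.log A -
        ((L : ℝ) / 2) * Real.log ((M : ℝ) / ((M : ℝ) - 1 + A ^ (-(1 : ℝ) / L)))
    Filter.Tendsto (fun L : ℕ => (L : ℝ) * e L) Filter.atTop
      (nhds (((M : ℝ) - 1) * (Real.log A) ^ 2 / (4 * (M : ℝ) ^ 2))) ∧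
    (2 ≤ M → ∃ c₁ c₂ : ℝ, ∃ n₀ : ℕ, 0 < c₁ ∧ 0 < c₂ ∧
      ∀ L : ℕ, n₀ ≤ L → c₁ / L ≤ e L ∧ e L ≤ c₂ / L) := by
  intro A e
  have hm : (1 : ℝ) ≤ M := by exact_mod_cast hM
  have hA : 1 < A := by
    have : 0 < (M : ℝ) * P / N := by positivity
    linarith
  have hlim : Tendsto (fun L : ℕ => (L : ℝ) * e L) atTop
      (𝓝 ((M - 1) * log A ^ 2 / (4 * M ^ 2))) := by
    have hscaled := ((tendsto_loss_div_sq hm).comp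
      (tendsto_const_div_natCast_nhdsGT_zero (log_pos hA))).const_mul (log A ^ 2 / 2)
    convert hscaled.congr' ((eventually_ne_atTop 0).mono fun L hL =>
      (natCast_mul_gap_eq hm hA hL).symm) using 2
    field_simp
    ring
  refine ⟨hlim, fun hM2 => exists_div_le_and_le_div_of_tendsto_natCast_mul ?_ hlim⟩
  have : (2 : ℝ) ≤ M := by exact_mod_cast hM2
  have := log_pos hA
  have : (0 : ℝ) < M - 1 := by linarith
  positivity
end

section
/- Let a, b be reals with b > a ≥ 0 and L ≥ 1 an integer. For λ = (λ₁, …, λ_L) with λ_k ≥ 0 and ∑ λ_k = 1, define R(λ) = ∑_{k=1}^L λ_k·((∑_{j<k} λ_j)·b + (1 − ∑_{j<k} λ_j)·a). Then R is maximized over the simplex uniquely at λ_k = 1/L for all k, where R = ((L+1)/(2L))·a + ((L−1)/(2L))·b. -/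
/-!
Writing `S k = ∑_{j<k} λ_j`, the rate is `a + (b - a) ∑_k λ_k S_k`, and `2 ∑_k λ_k S_k` is the
off-diagonal part of `(∑_k λ_k)² = 1`, namely `1 - ∑_k λ_k²`. Since `∑_k λ_k² = 1/L + ∑_k (λ_k - 1/L)²`,
the rate equals its value at the uniform switch minus `(b - a)/2 · ∑_k (λ_k - 1/L)²`.
-/

open Finset

theorem Finset.sq_sum_Ico_eq {R : Type*} [CommRing R] (x : ℕ → R) (m n : ℕ) :
    (∑ k ∈ Ico m n, x k) ^ 2
      = 2 * ∑ k ∈ Ico m n, x k * ∑ j ∈ Ico m k, x j + ∑ k ∈ Ico m n, x k ^ 2 := by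
  rcases lt_or_ge n m with hnm | hmn
  · simp [Ico_eq_empty_of_le hnm.le]
  induction n, hmn using Nat.le_induction with
  | base => simp
  | succ n hmn ih =>
    simp only [sum_Ico_succ_top hmn]
    linear_combination ih

theorem Finset.sum_sub_sum_div_card_sq {ι K : Type*} [Field K] (s : Finset ι) (f : ι → K)
    (hs : (#s : K) ≠ 0) :
    ∑ i ∈ s, (f i - (∑ j ∈ s, f j) / #s) ^ 2 = ∑ i ∈ s, f i ^ 2 - (∑ i ∈ s, f i) ^ 2 / #s := by
  simp only [sub_sq, sum_add_distrib, sum_sub_distrib, sum_const, nsmul_eq_mul, ← sum_mul,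
    ← mul_sum]
  field_simp
  ring

theorem sum_rate_eq_uniform_sub (a b : ℝ) (L : ℕ) (lam : ℕ → ℝ)
    (hsum : ∑ k ∈ Icc 1 L, lam k = 1) :
    ∑ k ∈ Icc 1 L, lam k *
        ((∑ j ∈ Ico 1 k, lam j) * b + (1 - ∑ j ∈ Ico 1 k, lam j) * a)
      = ((L + 1) / (2 * L)) * a + ((L - 1) / (2 * L)) * b
        - (b - a) / 2 * ∑ k ∈ Icc 1 L, (lam k - 1 / L) ^ 2 := by
  have hcard : #(Icc 1 L) = L := by simp
  have hL : (L : ℝ) ≠ 0 := Nat.cast_ne_zero.2 (by rintro rfl; simp at hsum)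
  have hsq := sq_sum_Ico_eq lam 1 (L + 1)
  have hvar := sum_sub_sum_div_card_sq (Icc 1 L) lam (by rwa [hcard])
  rw [Ico_add_one_right_eq_Icc] at hsq
  simp only [hsum, hcard] at hsq hvar
  calc ∑ k ∈ Icc 1 L, lam k * ((∑ j ∈ Ico 1 k, lam j) * b + (1 - ∑ j ∈ Ico 1 k, lam j) * a)
      = (∑ k ∈ Icc 1 L, lam k) * a + (b - a) * ∑ k ∈ Icc 1 L, lam k * ∑ j ∈ Ico 1 k, lam j := by
        rw [sum_mul, mul_sum, ← sum_add_distrib]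
        exact sum_congr rfl fun k _ ↦ by ring
    _ = _ := by
        rw [hsum, hvar]
        field_simp
        linear_combination (-(b - a) * L) * hsq

theorem stmt8_general (a b : ℝ) (hab : a < b) (L : ℕ) (lam : ℕ → ℝ)
    (hsum : ∑ k ∈ Finset.Icc 1 L, lam k = 1) :
    (∑ k ∈ Finset.Icc 1 L, lam k *
        ((∑ j ∈ Finset.Ico 1 k, lam j) * b + (1 - ∑ j ∈ Finset.Ico 1 k, lam j) * a))
      ≤ (((L : ℝ) + 1) / (2 * L)) * a + (((L : ℝ) - 1) / (2 * L)) * b ∧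
    ((∑ k ∈ Finset.Icc 1 L, lam k *
        ((∑ j ∈ Finset.Ico 1 k, lam j) * b + (1 - ∑ j ∈ Finset.Ico 1 k, lam j) * a))
      = (((L : ℝ) + 1) / (2 * L)) * a + (((L : ℝ) - 1) / (2 * L)) * b →
      ∀ k ∈ Finset.Icc 1 L, lam k = 1 / L) := by
  rw [sum_rate_eq_uniform_sub a b L lam hsum]
  have hdev : 0 ≤ ∑ k ∈ Icc 1 L, (lam k - 1 / L) ^ 2 := sum_nonneg fun k _ ↦ sq_nonneg _
  have hba : 0 < (b - a) / 2 := by linarith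
  refine ⟨sub_le_self _ (mul_nonneg hba.le hdev), fun heq k hk ↦ ?_⟩
  have hdev0 : ∑ k ∈ Icc 1 L, (lam k - 1 / L) ^ 2 = 0 := by
    simpa [hba.ne'] using heq
  exact sub_eq_zero.1 <| pow_eq_zero_iff two_ne_zero |>.1 <|
    (sum_eq_zero_iff_of_nonneg fun k _ ↦ sq_nonneg _).1 hdev0 k hk

theorem stmt8 (a b : ℝ) (ha : 0 ≤ a) (hab : a < b) (L : ℕ) (hL : 1 ≤ L)
    (lam : ℕ → ℝ) (hnonneg : ∀ k ∈ Finset.Icc 1 L, 0 ≤ lam k)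
    (hsum : ∑ k ∈ Finset.Icc 1 L, lam k = 1) :
    (∑ k ∈ Finset.Icc 1 L, lam k *
        ((∑ j ∈ Finset.Ico 1 k, lam j) * b + (1 - ∑ j ∈ Finset.Ico 1 k, lam j) * a))
      ≤ (((L : ℝ) + 1) / (2 * L)) * a + (((L : ℝ) - 1) / (2 * L)) * b ∧
    ((∑ k ∈ Finset.Icc 1 L, lam k *
        ((∑ j ∈ Finset.Ico 1 k, lam j) * b + (1 - ∑ j ∈ Finset.Ico 1 k, lam j) * a))
      = (((L : ℝ) + 1) / (2 * L)) * a + (((L : ℝ) - 1) / (2 * L)) * b →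
      ∀ k ∈ Finset.Icc 1 L, lam k = 1 / L) :=
  stmt8_general a b hab L lam hsum
end

section
/- Let M ≥ 1, P > 0, N > 0. The system of equations SIR₁(p) = SIR₂(p) = … = SIR_L(p), where SIR_k(p₁,…,p_L) = p_k/(M·P − M·∑_{j<k} p_j − p_k + N), subject to ∑_{k=1}^L p_k = P and p_k ≥ 0 for all k, has a unique solution. -/
/-!
Write `T k = M P - M (p₁ + ⋯ + p_{k-1}) + N` for the power still present when class `k` is decoded,
so that `SIR_k = p_k / (T k - p_k)`. A common SIR `c` forces `p_k = c / (1 + c) · T k`, hence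
`T (k + 1) = T k - M p_k = s · T k` with `s = 1 - M c / (1 + c)`. Since `T 1 = M P + N` and
`T (L + 1) = N`, the ratio `s` is a positive `L`-th root of `N / (M P + N)`, hence unique, and it
determines the split; conversely this geometric split does balance the SIRs.
-/

open Finset

noncomputable def residualPower (M : ℕ) (P N : ℝ) (p : ℕ → ℝ) (k : ℕ) : ℝ :=
  M * P - M * ∑ j ∈ Ico 1 k, p j + N

noncomputable def sir (M : ℕ) (P N : ℝ) (p : ℕ → ℝ) (k : ℕ) : ℝ :=
  p k / ((M : ℝ) * P - M * (∑ j ∈ Ico 1 k, p j) - p k + N)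

def IsBalancedSplit (M L : ℕ) (P N : ℝ) (p : ℕ → ℝ) : Prop :=
  (∀ k ∈ Icc 1 L, 0 ≤ p k) ∧ ∑ k ∈ Icc 1 L, p k = P ∧
    ∀ k ∈ Icc 1 L, ∀ k' ∈ Icc 1 L, sir M P N p k = sir M P N p k'

noncomputable def geomSplit (M : ℕ) (P N s : ℝ) (k : ℕ) : ℝ :=
  ((M : ℝ) * P + N) / M * (1 - s) * s ^ (k - 1)

lemma eq_pow_mul_of_forall_succ_eq_mul {α : Type*} [Monoid α] {f : ℕ → α} {s : α} {L : ℕ}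
    (h : ∀ k ∈ Icc 1 L, f (k + 1) = s * f k) : ∀ k ≤ L, f (k + 1) = s ^ k * f 1 := by
  intro k hk
  induction k with
  | zero => simp
  | succ k ih =>
    rw [h (k + 1) (mem_Icc.2 ⟨by omega, hk⟩), ih (by omega), pow_succ', mul_assoc]

lemma eq_div_one_add_mul_of_eq_mul_sub {x T c : ℝ} (h : x = c * (T - x)) (hc : 1 + c ≠ 0) :
    x = c / (1 + c) * T := by
  field_simp
  linarith

section residualPower

variable {M L : ℕ} {P N : ℝ} {q : ℕ → ℝ} {k : ℕ}

lemma sir_eq_div_residualPower_sub :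
    sir M P N q k = q k / (residualPower M P N q k - q k) := by
  rw [sir, residualPower]
  ring_nf

lemma residualPower_one : residualPower M P N q 1 = M * P + N := by
  simp [residualPower]

lemma residualPower_succ (hk : 1 ≤ k) :
    residualPower M P N q (k + 1) = residualPower M P N q k - M * q k := by
  rw [residualPower, residualPower, sum_Ico_succ_top hk]
  ring

lemma residualPower_of_sum_eq (hsum : ∑ k ∈ Icc 1 L, q k = P) :
    residualPower M P N q (L + 1) = N := by
  rw [residualPower, Ico_add_one_right_eq_Icc, hsum]
  ring

lemma le_residualPower (hq : ∀ k ∈ Icc 1 L, 0 ≤ q k) (hsum : ∑ k ∈ Icc 1 L, q k = P)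
    (hk : k ≤ L + 1) : N ≤ residualPower M P N q k := by
  have : ∑ j ∈ Ico 1 k, q j ≤ P := by
    rw [← hsum, ← Ico_add_one_right_eq_Icc]
    exact sum_le_sum_of_subset_of_nonneg (Ico_subset_Ico_right hk)
      fun j hj _ ↦ hq j (by rwa [← Ico_add_one_right_eq_Icc])
  rw [residualPower]
  nlinarith [(Nat.cast_nonneg M : (0 : ℝ) ≤ M)]

/-- The interference seen by class `k` is at least the noise, because it still contains the
residual power of class `k + 1` and the other `M - 1` users' class-`k` powers. -/
lemma le_residualPower_sub (hM : 1 ≤ M) (hq : ∀ k ∈ Icc 1 L, 0 ≤ q k)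
    (hsum : ∑ k ∈ Icc 1 L, q k = P) (hk : k ∈ Icc 1 L) :
    N ≤ residualPower M P N q k - q k := by
  obtain ⟨hk1, hkL⟩ := mem_Icc.1 hk
  have hnext := le_residualPower (M := M) (N := N) hq hsum (Nat.succ_le_succ hkL)
  rw [residualPower_succ hk1] at hnext
  have hM' : (1 : ℝ) ≤ M := by exact_mod_cast hM
  nlinarith [hq k hk]

end residualPower

section geomSplit

variable {M L : ℕ} {P N s : ℝ} {k : ℕ}

lemma sum_Ico_geomSplit (m : ℕ) :
    ∑ j ∈ Ico 1 (m + 1), geomSplit M P N s j = ((M : ℝ) * P + N) / M * (1 - s ^ m) := by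
  induction m with
  | zero => simp
  | succ m ih =>
    rw [sum_Ico_succ_top (by omega), ih, geomSplit, Nat.add_sub_cancel]
    ring

lemma residualPower_geomSplit (hM : M ≠ 0) (m : ℕ) :
    residualPower M P N (geomSplit M P N s) (m + 1) = ((M : ℝ) * P + N) * s ^ m := by
  rw [residualPower, sum_Ico_geomSplit]
  field_simp
  ring

lemma sir_geomSplit (hM : M ≠ 0) (hA : (M : ℝ) * P + N ≠ 0) (hs : s ≠ 0) (hk : 1 ≤ k) :
    sir M P N (geomSplit M P N s) k = (1 - s) / M / (1 - (1 - s) / M) := by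
  obtain ⟨m, rfl⟩ := Nat.exists_eq_add_of_le' hk
  rw [sir_eq_div_residualPower_sub, residualPower_geomSplit hM, geomSplit, Nat.add_sub_cancel,
    show ((M : ℝ) * P + N) / M * (1 - s) * s ^ m = ((M : ℝ) * P + N) * s ^ m * ((1 - s) / M) by
      ring,
    ← mul_one_sub, mul_div_mul_left _ _ (by positivity)]

lemma isBalancedSplit_geomSplit (hM : M ≠ 0) (hA : 0 < (M : ℝ) * P + N) (hs0 : 0 < s)
    (hs1 : s ≤ 1) (hsL : ((M : ℝ) * P + N) * s ^ L = N) :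
    IsBalancedSplit M L P N (geomSplit M P N s) := by
  refine ⟨fun k _ ↦ ?_, ?_, fun k hk k' hk' ↦ ?_⟩
  · have : 0 ≤ 1 - s := by linarith
    unfold geomSplit
    positivity
  · rw [← Ico_add_one_right_eq_Icc, sum_Ico_geomSplit]
    field_simp
    linear_combination -hsL
  · rw [sir_geomSplit hM hA.ne' hs0.ne' (mem_Icc.1 hk).1,
      sir_geomSplit hM hA.ne' hs0.ne' (mem_Icc.1 hk').1]

end geomSplit

lemma IsBalancedSplit.exists_eq_geomSplit {M L : ℕ} {P N : ℝ} {q : ℕ → ℝ} (hM : 1 ≤ M)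
    (hL : 1 ≤ L) (hN : 0 < N) (hq : IsBalancedSplit M L P N q) :
    ∃ s, 0 < s ∧ ((M : ℝ) * P + N) * s ^ L = N ∧ ∀ k ∈ Icc 1 L, q k = geomSplit M P N s k := by
  obtain ⟨hq0, hsum, hsir⟩ := hq
  have h1 : 1 ∈ Icc 1 L := mem_Icc.2 ⟨le_rfl, hL⟩
  have hden : ∀ k ∈ Icc 1 L, 0 < residualPower M P N q k - q k := fun k hk ↦
    hN.trans_le (le_residualPower_sub hM hq0 hsum hk)
  obtain ⟨a, hprop⟩ : ∃ a, ∀ k ∈ Icc 1 L, q k = a * residualPower M P N q k := by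
    have hc : 0 ≤ sir M P N q 1 := by
      rw [sir_eq_div_residualPower_sub]
      exact div_nonneg (hq0 1 h1) (hden 1 h1).le
    refine ⟨sir M P N q 1 / (1 + sir M P N q 1), fun k hk ↦ eq_div_one_add_mul_of_eq_mul_sub ?_ (by positivity)⟩
    rw [← div_eq_iff (hden k hk).ne', ← sir_eq_div_residualPower_sub, hsir k hk 1 h1]
  have hgeom : ∀ k ≤ L,
      residualPower M P N q (k + 1) = (1 - M * a) ^ k * residualPower M P N q 1 := by
    refine eq_pow_mul_of_forall_succ_eq_mul fun k hk ↦ ?_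
    rw [residualPower_succ (mem_Icc.1 hk).1, hprop k hk]
    ring
  have hT1 : residualPower M P N q 1 = M * P + N := residualPower_one
  have hTpos : ∀ k ≤ L + 1, 0 < residualPower M P N q k := fun k hk ↦
    hN.trans_le (le_residualPower hq0 hsum hk)
  refine ⟨1 - M * a, ?_, ?_, fun k hk ↦ ?_⟩
  · refine pos_of_mul_pos_left ?_ (hTpos 1 (by omega)).le
    rw [← pow_one (1 - M * a), ← hgeom 1 hL]
    exact hTpos 2 (by omega)
  · rw [← hT1, mul_comm, ← hgeom L le_rfl]
    exact residualPower_of_sum_eq hsum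
  · obtain ⟨hk1, hkL⟩ := mem_Icc.1 hk
    obtain ⟨m, rfl⟩ := Nat.exists_eq_add_of_le' hk1
    have hM0 : (M : ℝ) ≠ 0 := by positivity
    rw [hprop _ hk, hgeom m (by omega), hT1, geomSplit, Nat.add_sub_cancel]
    field_simp
    ring

theorem stmt12 (M L : ℕ) (P N : ℝ) (hM : 1 ≤ M) (hL : 1 ≤ L)
    (hP : 0 < P) (hN : 0 < N) :
    ∃ p : ℕ → ℝ,
      ((∀ k ∈ Finset.Icc 1 L, 0 ≤ p k) ∧
       (∑ k ∈ Finset.Icc 1 L, p k = P) ∧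
       (∀ k ∈ Finset.Icc 1 L, ∀ k' ∈ Finset.Icc 1 L,
          p k / ((M : ℝ) * P - M * (∑ j ∈ Finset.Ico 1 k, p j) - p k + N) =
          p k' / ((M : ℝ) * P - M * (∑ j ∈ Finset.Ico 1 k', p j) - p k' + N))) ∧
      ∀ q : ℕ → ℝ,
        ((∀ k ∈ Finset.Icc 1 L, 0 ≤ q k) ∧
         (∑ k ∈ Finset.Icc 1 L, q k = P) ∧
         (∀ k ∈ Finset.Icc 1 L, ∀ k' ∈ Finset.Icc 1 L,
            q k / ((M : ℝ) * P - M * (∑ j ∈ Finset.Ico 1 k, q j) - q k + N) =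
            q k' / ((M : ℝ) * P - M * (∑ j ∈ Finset.Ico 1 k', q j) - q k' + N))) →
        ∀ k ∈ Finset.Icc 1 L, q k = p k := by
  have hA : 0 < (M : ℝ) * P + N := by positivity
  set r := (N / (M * P + N)) ^ ((L : ℝ)⁻¹)
  have hr0 : 0 < r := by positivity
  have hr1 : r ≤ 1 :=
    Real.rpow_le_one (by positivity) (div_le_one_of_le₀ (by nlinarith) hA.le) (by positivity)
  have hrL : ((M : ℝ) * P + N) * r ^ L = N := by
    rw [Real.rpow_inv_natCast_pow (by positivity) (by omega)]
    field_simp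
  refine ⟨geomSplit M P N r, isBalancedSplit_geomSplit (by omega) hA hr0 hr1 hrL,
    fun q hq k hk ↦ ?_⟩
  obtain ⟨s, hs0, hsL, hqs⟩ := IsBalancedSplit.exists_eq_geomSplit hM hL hN hq
  have hsr : s = r :=
    (pow_left_inj₀ hs0.le hr0.le (by omega)).1 (mul_left_cancel₀ hA.ne' (hsL.trans hrL.symm))
  rw [hqs k hk, hsr]
end

section
/- Let M ≥ 2, P > 0, N > 0, and suppose all M users adopt the geometric power split p_{ik} = (N/M)·A^((L_i − k)/L_i)·(A^(1/L_i) − 1) for k = 1, …, L_i with A = 1 + MP/N, where the L_i may differ across users, and rates r_{ik} = (1/2)·log(1 + p_{ik}/(M·(P − ∑_{j<k} p_{ij}) − p_{ik} + N)). If at each decoding step the receiver decodes the next virtual user of a user i whose cumulative decoded power π_i = ∑_{j<k} p_{ij} is minimal among all users, then the rate r_{ik} does not exceed (1/2)·log(1 + p_{ik}/(M·P − ∑_{m=1}^M π_m − p_{ik} + N)), i.e., the actual interference M·P − ∑_m π_m − p_{ik} + N faced by this virtual user is at most the tolerable interference M·(P − π_i) − p_{ik} + N. -/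
theorem stmt15 (M : ℕ) (P N : ℝ) (hM : 2 ≤ M) (hP : 0 < P) (hN : 0 < N)
    (π : Fin M → ℝ) (hπ0 : ∀ m, 0 ≤ π m) (hπP : ∀ m, π m ≤ P)
    (i : Fin M) (hmin : ∀ m, π i ≤ π m)
    (p : ℝ) (hp : 0 < p)
    (hpos : 0 < (M : ℝ) * P - (∑ m, π m) - p + N) :
    ((M : ℝ) * P - (∑ m, π m) - p + N ≤ (M : ℝ) * (P - π i) - p + N) ∧
    (1 / 2) * Real.log (1 + p / ((M : ℝ) * (P - π i) - p + N))
      ≤ (1 / 2) * Real.log (1 + p / ((M : ℝ) * P - (∑ m, π m) - p + N)) := by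
  have hsum : (M : ℝ) * π i ≤ ∑ m, π m := by
    calc (M : ℝ) * π i = ∑ _m : Fin M, π i := by
          simp [mul_comm]
      _ ≤ ∑ m, π m := Finset.sum_le_sum fun m _ => hmin m
  have h1 : (M : ℝ) * P - (∑ m, π m) - p + N ≤ (M : ℝ) * (P - π i) - p + N := by
    nlinarith
  refine ⟨h1, ?_⟩
  have hpos2 : 0 < (M : ℝ) * (P - π i) - p + N := lt_of_lt_of_le hpos h1
  have hdiv : p / ((M : ℝ) * (P - π i) - p + N) ≤ p / ((M : ℝ) * P - (∑ m, π m) - p + N) :=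
    div_le_div_of_nonneg_left hp.le hpos h1
  have harg : (0:ℝ) < 1 + p / ((M : ℝ) * (P - π i) - p + N) := by positivity
  have hlog : Real.log (1 + p / ((M : ℝ) * (P - π i) - p + N))
      ≤ Real.log (1 + p / ((M : ℝ) * P - (∑ m, π m) - p + N)) :=
    Real.log_le_log harg (by linarith)
  linarith
end

section
/- Let M ≥ 1, N > 0, and P₁, …, P_M > 0 with total power T = ∑_j P_j. Suppose every user i splits its power with common fractions γ_k = (N/T)·(1 + T/N)^((L−k)/L)·((1 + T/N)^(1/L) − 1) for k = 1, …, L, so user i's k-th virtual user has power γ_k·P_i, and virtual user classes are decoded in order with rates r_{ik} = (1/2)·log(1 + γ_k·P_i/(T·(1 − ∑_{j<k} γ_j) − γ_k·P_i + N)). Then lim_{L→∞} ∑_{k=1}^L r_{ik} = (P_i/(2T))·log(1 + T/N) for every i. -/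
/-!
Write `a = 1 + T/N`, `u = a^(1/L)` and `c = 1 - P_i/T`. The fractions `γ_k` telescope, so the
decoding denominator of every class is `N·a^((L-k)/L)·(1 + c(u - 1))` and each of the `L` rates
equals `½·log (u / (1 + c(u - 1)))`, independently of `k`. The total rate is therefore
`½·(log a - L·log (1 + c(a^(1/L) - 1)))`, and `L·log (1 + c(a^(1/L) - 1)) → c·log a` because it is a
difference quotient at `0` of `s ↦ log (1 + c(a^s - 1))`.
-/

open Filter Topology Finset Real

theorem HasDerivAt.tendsto_mul_apply_inv_atTop {F : ℝ → ℝ} {d : ℝ} (hF : HasDerivAt F d 0)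
    (h0 : F 0 = 0) : Tendsto (fun x : ℝ => x * F x⁻¹) atTop (𝓝 d) := by
  refine ((hasDerivAt_iff_tendsto_slope.mp hF).comp
    (tendsto_inv_atTop_nhdsGT_zero.mono_right (nhdsGT_le_nhdsNE 0))).congr fun x => ?_
  simp [slope_def_field, h0, div_eq_mul_inv, mul_comm]

theorem tendsto_mul_log_one_add_mul_rpow_one_div_sub_one {a : ℝ} (ha : 0 < a) (c : ℝ) :
    Tendsto (fun x : ℝ => x * log (1 + c * (a ^ (1 / x) - 1))) atTop (𝓝 (c * log a)) := by
  have hF : HasDerivAt (fun s : ℝ => log (1 + c * (a ^ s - 1))) (c * log a) 0 := by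
    simpa using ((((hasStrictDerivAt_const_rpow ha 0).hasDerivAt.sub_const 1).const_mul c).const_add
      1).log (by simp)
  simpa only [one_div] using hF.tendsto_mul_apply_inv_atTop (by simp)

theorem sum_Ico_rpow_mul_rpow_one_div_sub_one {a x : ℝ} (ha : 0 < a) (hx : x ≠ 0) {k : ℕ}
    (hk : 1 ≤ k) :
    ∑ j ∈ Ico 1 k, a ^ ((x - j) / x) * (a ^ (1 / x) - 1) =
      a - a ^ ((x - k) / x) * a ^ (1 / x) := by
  induction k, hk using Nat.le_induction with
  | base =>
    rw [← rpow_add ha, Nat.cast_one, ← add_div, sub_add_cancel, div_self hx, rpow_one]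
    simp
  | succ k hk ih =>
    have hshift : a ^ ((x - k) / x) = a ^ ((x - (k + 1 : ℕ)) / x) * a ^ (1 / x) := by
      rw [← rpow_add ha]
      congr 1
      push_cast
      ring
    rw [sum_Ico_succ_top hk, ih, hshift]
    ring

noncomputable def splitFraction (N T : ℝ) (L k : ℕ) : ℝ :=
  (N / T) * (1 + T / N) ^ (((L : ℝ) - k) / L) * ((1 + T / N) ^ ((1 : ℝ) / L) - 1)

theorem log_one_add_splitFraction_mul_div {N T p : ℝ} (hN : 0 < N) (hT : 0 < T) (hpT : p ≤ T)
    {L k : ℕ} (hL : L ≠ 0) (hk : 1 ≤ k) :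
    log (1 + splitFraction N T L k * p /
        (T * (1 - ∑ j ∈ Ico 1 k, splitFraction N T L j) - splitFraction N T L k * p + N)) =
      log (1 + T / N) / L - log (1 + (1 - p / T) * ((1 + T / N) ^ (1 / (L : ℝ)) - 1)) := by
  set a := 1 + T / N with ha_def
  have ha : 1 < a := by simp only [ha_def]; linarith [div_pos hT hN]
  have hL' : (0 : ℝ) < L := by positivity
  set u := a ^ (1 / (L : ℝ))
  set b := a ^ (((L : ℝ) - k) / L)
  have hu : 1 < u := one_lt_rpow ha (by positivity)
  have hb : 0 < b := by positivity
  have hγ : splitFraction N T L k = N / T * b * (u - 1) := rfl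
  have hsum : ∑ j ∈ Ico 1 k, splitFraction N T L j = N / T * (a - b * u) := by
    simp only [splitFraction, mul_assoc, ← mul_sum]
    rw [sum_Ico_rpow_mul_rpow_one_div_sub_one (by positivity) hL'.ne' hk]
  have hw : 0 < 1 + (1 - p / T) * (u - 1) := by
    have : p / T ≤ 1 := (div_le_one hT).mpr hpT
    nlinarith
  have hratio : 1 + splitFraction N T L k * p /
      (T * (1 - ∑ j ∈ Ico 1 k, splitFraction N T L j) - splitFraction N T L k * p + N) =
        u / (1 + (1 - p / T) * (u - 1)) := by
    have hden : T * (1 - ∑ j ∈ Ico 1 k, splitFraction N T L j) - splitFraction N T L k * p + N =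
        N * b * (1 + (1 - p / T) * (u - 1)) := by
      rw [hsum, hγ, ha_def]
      field_simp
      ring
    rw [hden, hγ, one_add_div (by positivity), div_eq_div_iff (by positivity) hw.ne']
    field_simp
    ring
  rw [hratio, log_div (by positivity) hw.ne', log_rpow (by positivity)]
  ring

theorem stmt16_general (M : ℕ) (N : ℝ) (hN : 0 < N)
    (P : Fin M → ℝ) (hP : ∀ j, 0 < P j) (i : Fin M) :
    let T : ℝ := ∑ j, P j
    let γ : ℕ → ℕ → ℝ := fun L k =>
      (N / T) * (1 + T / N) ^ (((L : ℝ) - k) / L) * ((1 + T / N) ^ ((1 : ℝ) / L) - 1)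
    Filter.Tendsto
      (fun L : ℕ => ∑ k ∈ Finset.Icc 1 L,
        (1 / 2) * Real.log (1 + γ L k * P i /
          (T * (1 - ∑ j ∈ Finset.Ico 1 k, γ L j) - γ L k * P i + N)))
      Filter.atTop
      (nhds ((P i / (2 * T)) * Real.log (1 + T / N))) := by
  intro T γ
  have hγ : γ = splitFraction N T := rfl
  have hpT : P i ≤ T := single_le_sum (fun j _ => (hP j).le) (mem_univ i)
  have hT : 0 < T := (hP i).trans_le hpT
  have hsum : ∀ L : ℕ, L ≠ 0 → ∑ k ∈ Icc 1 L, (1 / 2) * log (1 + γ L k * P i /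
        (T * (1 - ∑ j ∈ Ico 1 k, γ L j) - γ L k * P i + N)) =
      (1 / 2) * (log (1 + T / N) -
        L * log (1 + (1 - P i / T) * ((1 + T / N) ^ (1 / (L : ℝ)) - 1))) := by
    intro L hL
    rw [hγ, sum_congr rfl fun k hk =>
      by rw [log_one_add_splitFraction_mul_div hN hT hpT hL (mem_Icc.1 hk).1],
      sum_const, Nat.card_Icc, Nat.add_sub_cancel, nsmul_eq_mul]
    field_simp
  have hlim := (((tendsto_mul_log_one_add_mul_rpow_one_div_sub_one
    (show 0 < 1 + T / N by positivity) (1 - P i / T)).comp tendsto_natCast_atTop_atTop).const_sub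
      (log (1 + T / N))).const_mul (1 / 2)
  convert hlim.congr' ((eventually_ne_atTop 0).mono fun L hL => (hsum L hL).symm) using 2
  field_simp
  ring

theorem stmt16 (M : ℕ) (hM : 1 ≤ M) (N : ℝ) (hN : 0 < N)
    (P : Fin M → ℝ) (hP : ∀ j, 0 < P j) (i : Fin M) :
    let T : ℝ := ∑ j, P j
    let γ : ℕ → ℕ → ℝ := fun L k =>
      (N / T) * (1 + T / N) ^ (((L : ℝ) - k) / L) * ((1 + T / N) ^ ((1 : ℝ) / L) - 1)
    Filter.Tendsto
      (fun L : ℕ => ∑ k ∈ Finset.Icc 1 L,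
        (1 / 2) * Real.log (1 + γ L k * P i /
          (T * (1 - ∑ j ∈ Finset.Ico 1 k, γ L j) - γ L k * P i + N)))
      Filter.atTop
      (nhds ((P i / (2 * T)) * Real.log (1 + T / N))) :=
  stmt16_general M N hN P hP i
end
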